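/- Let S be an inverse semigroup with zero whose semilattice of idempotents E is countable, and let s ∈ S^×. For a character φ on E with φ(s* s) = 1, define θ_s(φ) : E → {0,1} by θ_s(φ)(e) = φ(s* e s). Then θ_s(φ) is a character with θ_s(φ)(s s*) = 1; the map θ_s : D_{s*s} → D_{ss*} is a homeomorphism with inverse θ_{s*}; and for every e ∈ E one has θ_s(D_{s*s} ∩ D_e) = D_{s e s*}. -/

import Mathlib

/-- An inverse semigroup structure on a semigroup with zero: `star s` is the unique
generalized inverse of `s`. -/
structure IsInvSemigroup (S : Type*) [SemigroupWithZero S] (star : S → S) : Prop where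
  mul_star_mul : ∀ s : S, s * star s * s = s
  star_mul_star : ∀ s : S, star s * s * star s = star s
  star_unique : ∀ s t : S, s * t * s = s → t * s * t = t → t = star s

/-- `e` belongs to the semilattice of idempotents `E(S) = {s s* : s ∈ S}`. -/
def IsIdemE {S : Type*} [SemigroupWithZero S] (star : S → S) (e : S) : Prop :=
  ∃ x : S, e = x * star x

/-- The natural partial order on an inverse semigroup: `s ≤ t` iff `s = e t` for some
idempotent `e`. -/
def natLe {S : Type*} [SemigroupWithZero S] (star : S → S) (s t : S) : Prop :=
  ∃ e : S, IsIdemE star e ∧ s = e * t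

/-- `m` is a maximal element of `(S^×, ≤)`. -/
def IsMaxNonzero {S : Type*} [SemigroupWithZero S] (star : S → S) (m : S) : Prop :=
  m ≠ 0 ∧ ∀ t : S, t ≠ 0 → natLe star m t → t = m

/-- `S` is `0`-`F`-inverse: every nonzero element lies beneath a unique maximal element
of `(S^×, ≤)`. -/
def ZeroFInverse {S : Type*} [SemigroupWithZero S] (star : S → S) : Prop :=
  ∀ s : S, s ≠ 0 → ∃! m : S, IsMaxNonzero star m ∧ natLe star s m

/-- A morphism (grading) `σ : S^× → G`: `σ(st) = σ(s)σ(t)` whenever `st ≠ 0`. -/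
def IsGrading {S : Type*} [SemigroupWithZero S] {G : Type*} [Group G] (σ : S → G) : Prop :=
  ∀ s t : S, s ≠ 0 → t ≠ 0 → s * t ≠ 0 → σ (s * t) = σ s * σ t

/-- A character on the semilattice of idempotents `E(S)`, modelled as a `Bool`-valued
function on `S` that is multiplicative on idempotents, nonzero, kills `0` and vanishes
off `E(S)` (the latter normalization identifies it with a function on `E(S)`). -/
def IsCharSp {S : Type*} [SemigroupWithZero S] (star : S → S) (φ : S → Bool) : Prop :=
  (∀ e f : S, IsIdemE star e → IsIdemE star f → φ (e * f) = (φ e && φ f)) ∧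
  φ 0 = false ∧ (∃ e : S, IsIdemE star e ∧ φ e = true) ∧
  ∀ s : S, ¬ IsIdemE star s → φ s = false

/-- The compact open set `D_e = {φ ∈ Ê : φ(e) = 1}`, inside the function space
`S → Bool` carrying the product topology. -/
def Dset {S : Type*} [SemigroupWithZero S] (star : S → S) (e : S) : Set (S → Bool) :=
  {φ : S → Bool | IsCharSp star φ ∧ φ e = true}

open Classical in
/-- The map `θ_s`, given by `θ_s(φ)(e) = φ(s* e s)` for `e ∈ E(S)`. -/
noncomputable def theta {S : Type*} [SemigroupWithZero S] (star : S → S) (s : S)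
    (φ : S → Bool) : S → Bool :=
  fun e => if IsIdemE star e then φ (star s * e * s) else false


/-!
Conjugation `e ↦ s* e s` maps idempotents to idempotents multiplicatively, because idempotents
of an inverse semigroup commute; so `θ_s` is a character whenever `φ(s* s) = 1`. On characters
in `D_{s* s}` one has `θ_{s*} (θ_s φ)(e) = φ(s* s e s* s) = φ(e) φ(s* s) = φ(e)`, giving the inverse,
and continuity holds coordinatewise since every coordinate of `θ_s` is a coordinate projection
or constant.
-/

namespace IsInvSemigroup

variable {S : Type*} [SemigroupWithZero S] {star : S → S}

theorem star_star (h : IsInvSemigroup S star) (s : S) : star (star s) = s :=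
  (h.star_unique (star s) s (h.star_mul_star s) (h.mul_star_mul s)).symm

theorem star_mul_mul_star_mul (h : IsInvSemigroup S star) (s y : S) :
    star s * (s * (star s * y)) = star s * y := by
  rw [← mul_assoc, ← mul_assoc, h.star_mul_star]

theorem star_eq_self_of_isIdempotentElem (h : IsInvSemigroup S star) {e : S}
    (he : IsIdempotentElem e) : star e = e :=
  (h.star_unique e e (by rw [he.eq, he.eq]) (by rw [he.eq, he.eq])).symm

theorem isIdemE_iff (h : IsInvSemigroup S star) {e : S} :
    IsIdemE star e ↔ IsIdempotentElem e := by
  refine ⟨fun ⟨x, hx⟩ => ?_, fun he => ⟨e, by rw [h.star_eq_self_of_isIdempotentElem he, he.eq]⟩⟩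
  rw [hx, IsIdempotentElem, ← mul_assoc, h.mul_star_mul]

theorem isIdempotentElem_mul (h : IsInvSemigroup S star) {e f : S} (he : IsIdempotentElem e)
    (hf : IsIdempotentElem f) : IsIdempotentElem (e * f) := by
  set x := star (e * f)
  -- `f x e` is a second inverse of `e f`
  have hx : f * x * e = x := by
    refine h.star_unique (e * f) (f * x * e) ?_ ?_
    · simpa only [mul_assoc, he.mul_self_mul, hf.mul_self_mul] using h.mul_star_mul (e * f)
    · simpa only [mul_assoc, he.mul_self_mul, hf.mul_self_mul] using
        congrArg (f * · * e) (h.star_mul_star (e * f))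
  have hxx : IsIdempotentElem x :=
    calc x * x = f * x * e * (f * x * e) := by rw [hx]
      _ = f * (x * (e * f) * x) * e := by simp only [mul_assoc]
      _ = x := by rw [h.star_mul_star, hx]
  have hef : e * f = x := by rw [← h.star_eq_self_of_isIdempotentElem hxx, h.star_star]
  rw [IsIdempotentElem, hef]
  exact hxx

theorem commute_of_isIdempotentElem (h : IsInvSemigroup S star) {e f : S}
    (he : IsIdempotentElem e) (hf : IsIdempotentElem f) : Commute e f := by
  have hfe : f * e = star (e * f) := by
    refine h.star_unique (e * f) (f * e) ?_ ?_
    · simpa only [mul_assoc, he.mul_self_mul, hf.mul_self_mul] using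
        (h.isIdempotentElem_mul he hf).eq
    · simpa only [mul_assoc, he.mul_self_mul, hf.mul_self_mul] using
        (h.isIdempotentElem_mul hf he).eq
  show e * f = f * e
  rw [hfe, h.star_eq_self_of_isIdempotentElem (h.isIdempotentElem_mul he hf)]

theorem commute_mul_star (h : IsInvSemigroup S star) {e : S} (he : IsIdemE star e) (s : S) :
    Commute e (s * star s) :=
  h.commute_of_isIdempotentElem (h.isIdemE_iff.1 he) (h.isIdemE_iff.1 ⟨s, rfl⟩)

theorem conj_mul_conj (h : IsInvSemigroup S star) {e : S} (he : IsIdemE star e) (s f : S) :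
    star s * e * s * (star s * f * s) = star s * (e * f) * s := by
  have := (h.commute_mul_star he s).left_comm (f * s)
  simp only [mul_assoc] at this ⊢
  rw [this, h.star_mul_mul_star_mul]

theorem isIdemE_conj (h : IsInvSemigroup S star) {e : S} (he : IsIdemE star e) (s : S) :
    IsIdemE star (star s * e * s) := by
  rw [h.isIdemE_iff, IsIdempotentElem, h.conj_mul_conj he, (h.isIdemE_iff.1 he).eq]

theorem star_mul_conj_mul (h : IsInvSemigroup S star) {e : S} (he : IsIdemE star e) (s : S) :
    star s * (s * e * star s) * s = e * (star s * s) := by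
  have := (h.commute_mul_star he (star s)).left_comm (star s * s)
  rw [h.star_star] at this
  simp only [mul_assoc] at this ⊢
  rw [← this, h.star_mul_mul_star_mul]

end IsInvSemigroup

section Theta

variable {S : Type*} [SemigroupWithZero S] {star : S → S}

theorem theta_apply {φ : S → Bool} {e : S} (he : IsIdemE star e) (s : S) :
    theta star s φ e = φ (star s * e * s) :=
  if_pos he

theorem theta_apply_of_not_isIdemE {φ : S → Bool} {e : S} (he : ¬ IsIdemE star e) (s : S) :
    theta star s φ e = false :=
  if_neg he

theorem continuous_theta (s : S) : Continuous (theta star s) := by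
  refine continuous_pi fun e => ?_
  by_cases he : IsIdemE star e
  · simp only [theta, if_pos he]
    exact continuous_apply _
  · simp only [theta, if_neg he]
    exact continuous_const

variable (h : IsInvSemigroup S star)
include h

theorem theta_mem_Dset (s : S) {φ : S → Bool} (hφ : φ ∈ Dset star (star s * s)) :
    theta star s φ ∈ Dset star (s * star s) := by
  obtain ⟨⟨hmul, hzero, -, -⟩, hφs⟩ := hφ
  have hss : theta star s φ (s * star s) = true := by
    rwa [theta_apply ⟨s, rfl⟩, ← mul_assoc, h.star_mul_star]
  refine ⟨⟨fun e f he hf => ?_, ?_, ⟨s * star s, ⟨s, rfl⟩, hss⟩,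
    fun t ht => theta_apply_of_not_isIdemE ht s⟩, hss⟩
  · have hef : IsIdemE star (e * f) :=
      h.isIdemE_iff.2 (h.isIdempotentElem_mul (h.isIdemE_iff.1 he) (h.isIdemE_iff.1 hf))
    rw [theta_apply hef, theta_apply he, theta_apply hf, ← h.conj_mul_conj he,
      hmul _ _ (h.isIdemE_conj he s) (h.isIdemE_conj hf s)]
  · rw [theta_apply ⟨0, (zero_mul _).symm⟩, mul_zero, zero_mul, hzero]

theorem theta_star_theta (s : S) {φ : S → Bool} (hφ : φ ∈ Dset star (star s * s)) :
    theta star (star s) (theta star s φ) = φ := by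
  obtain ⟨⟨hmul, -, -, hoff⟩, hφs⟩ := hφ
  funext e
  by_cases he : IsIdemE star e
  · have hses : IsIdemE star (s * e * star s) := by
      simpa only [h.star_star] using h.isIdemE_conj he (star s)
    rw [theta_apply he, h.star_star, theta_apply hses, h.star_mul_conj_mul he,
      hmul e _ he ⟨star s, by rw [h.star_star]⟩, hφs, Bool.and_true]
  · rw [theta_apply_of_not_isIdemE he, hoff e he]

theorem theta_star_mem_Dset (s : S) {ψ : S → Bool} (hψ : ψ ∈ Dset star (s * star s)) :
    theta star (star s) ψ ∈ Dset star (star s * s) := by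
  simpa only [h.star_star] using theta_mem_Dset h (star s) (by rwa [h.star_star])

theorem theta_theta_star (s : S) {ψ : S → Bool} (hψ : ψ ∈ Dset star (s * star s)) :
    theta star s (theta star (star s) ψ) = ψ := by
  simpa only [h.star_star] using theta_star_theta h (star s) (by rwa [h.star_star])

theorem image_theta_Dset_inter (s : S) {e : S} (he : IsIdemE star e) :
    theta star s '' (Dset star (star s * s) ∩ Dset star e) = Dset star (s * e * star s) := by
  have hses : IsIdemE star (s * e * star s) := by
    simpa only [h.star_star] using h.isIdemE_conj he (star s)
  ext ψ
  constructor
  · rintro ⟨φ, ⟨hφ, -, hφe⟩, rfl⟩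
    refine ⟨(theta_mem_Dset h s hφ).1, ?_⟩
    rw [theta_apply hses, h.star_mul_conj_mul he, hφ.1.1 e _ he ⟨star s, by rw [h.star_star]⟩,
      hφe, hφ.2, Bool.and_self]
  · rintro ⟨hψ, hψe⟩
    -- `s e s*` lies below `s s*`, so `ψ (s s*) = 1` as well
    have hψs : ψ (s * star s) = true := by
      have hle : s * e * star s * (s * star s) = s * e * star s := by
        simp only [mul_assoc]
        rw [← mul_assoc (star s), h.star_mul_star]
      have := hψ.1 _ _ hses ⟨s, rfl⟩
      rw [hle, hψe] at this
      exact (Bool.and_eq_true_iff.1 this.symm).2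
    refine ⟨theta star (star s) ψ, ⟨theta_star_mem_Dset h s ⟨hψ, hψs⟩, ?_⟩,
      theta_theta_star h s ⟨hψ, hψs⟩⟩
    refine ⟨(theta_star_mem_Dset h s ⟨hψ, hψs⟩).1, ?_⟩
    rwa [theta_apply he, h.star_star]

end Theta

theorem stmt11_general {S : Type*} [SemigroupWithZero S] (star : S → S)
    (hinv : IsInvSemigroup S star)
    (s : S) :
    (∀ φ ∈ Dset star (star s * s), theta star s φ ∈ Dset star (s * star s)) ∧
    (∀ ψ ∈ Dset star (s * star s), theta star (star s) ψ ∈ Dset star (star s * s)) ∧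
    (∀ φ ∈ Dset star (star s * s), theta star (star s) (theta star s φ) = φ) ∧
    (∀ ψ ∈ Dset star (s * star s), theta star s (theta star (star s) ψ) = ψ) ∧
    ContinuousOn (theta star s) (Dset star (star s * s)) ∧
    ContinuousOn (theta star (star s)) (Dset star (s * star s)) ∧
    (∀ e : S, IsIdemE star e →
      theta star s '' (Dset star (star s * s) ∩ Dset star e) = Dset star (s * e * star s)) :=
  ⟨fun _ => theta_mem_Dset hinv s, fun _ => theta_star_mem_Dset hinv s,
    fun _ => theta_star_theta hinv s, fun _ => theta_theta_star hinv s,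
    (continuous_theta s).continuousOn, (continuous_theta (star s)).continuousOn,
    fun _ => image_theta_Dset_inter hinv s⟩

/-- for `s ∈ S^×`, `θ_s(φ)` is a character with `θ_s(φ)(s s*) = 1` for each
character `φ` with `φ(s* s) = 1`; the map `θ_s : D_{s* s} → D_{s s*}` is a homeomorphism
with inverse `θ_{s*}`; and `θ_s(D_{s* s} ∩ D_e) = D_{s e s*}` for every `e ∈ E(S)`. -/
theorem stmt11 {S : Type*} [SemigroupWithZero S] (star : S → S)
    (hinv : IsInvSemigroup S star)
    (hcount : Countable {e : S // IsIdemE star e})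
    (s : S) (hs : s ≠ 0) :
    (∀ φ ∈ Dset star (star s * s), theta star s φ ∈ Dset star (s * star s)) ∧
    (∀ ψ ∈ Dset star (s * star s), theta star (star s) ψ ∈ Dset star (star s * s)) ∧
    (∀ φ ∈ Dset star (star s * s), theta star (star s) (theta star s φ) = φ) ∧
    (∀ ψ ∈ Dset star (s * star s), theta star s (theta star (star s) ψ) = ψ) ∧
    ContinuousOn (theta star s) (Dset star (star s * s)) ∧
    ContinuousOn (theta star (star s)) (Dset star (s * star s)) ∧
    (∀ e : S, IsIdemE star e →
      theta star s '' (Dset star (star s * s) ∩ Dset star e) = Dset star (s * e * star s)) :=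
  stmt11_general star hinv s
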